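/- Let k ≥ 2 and n ≥ 2k be integers, and let G be a balanced bipartite graph on vertex set [2n] with bipartition (X, Y). Suppose u, v both lie in X (or both in Y) with u < v. If ρ(G) ≥ ρ(B_{n,k}) and S_{uv}(G) is isomorphic to B_{n,k}, then G is isomorphic to B_{n,k}. -/

import Mathlib

open SimpleGraph

/-- Spectral radius: supremum of the (real) eigenvalues of the adjacency matrix. -/
noncomputable def specRad {V : Type*} [Fintype V] [DecidableEq V] (G : SimpleGraph V) : ℝ :=
  sSup {x : ℝ | Module.End.HasEigenvalue
    (Matrix.toLin' (@SimpleGraph.adjMatrix ℝ V G (Classical.decRel _) _ _)) x}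

/-- The map on edges used by the `(x,y)`-shift: replace `y` by `x`. -/
def shiftMap {V : Type*} [DecidableEq V] (x y : V) (e : Sym2 V) : Sym2 V :=
  Sym2.map (fun v => if v = y then x else v) e

open scoped Classical in
/-- The `(x,y)`-shift of a graph. -/
noncomputable def shiftGraph {V : Type*} [DecidableEq V] (G : SimpleGraph V) (x y : V) :
    SimpleGraph V :=
  SimpleGraph.fromEdgeSet
    ((fun e => if y ∈ e ∧ x ∉ e ∧ shiftMap x y e ∉ G.edgeSet then shiftMap x y e else e) ''
      G.edgeSet)

/-- Balanced bipartite graph on `[2n]` with parts `X = {0,…,n-1}`, `Y = {n,…,2n-1}`: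
`x ∈ X` is adjacent to `y ∈ Y` iff `x < a` or `y < 2n - b`.
`bipG n (k-1) 1 = K_{k-1,n-1} ⊔ quasi-complement of K_{n-k+1,1}`. -/
def bipG (n a b : ℕ) : SimpleGraph (Fin (2*n)) where
  Adj u v := (u.val < n ∧ n ≤ v.val ∧ (u.val < a ∨ v.val < 2*n - b)) ∨
             (v.val < n ∧ n ≤ u.val ∧ (v.val < a ∨ u.val < 2*n - b))
  symm := ⟨by intro u v h; tauto⟩
  loopless := ⟨by intro u h; rcases h with ⟨h1, h2, -⟩ | ⟨h1, h2, -⟩ <;> omega⟩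

/-- `H` is a rainbow `k`-factor of the family `F`. -/
def IsRainbowFactor {V : Type*} {m : ℕ} (F : Fin m → SimpleGraph V) (k : ℕ)
    (H : SimpleGraph V) : Prop :=
  (∀ v, (H.neighborSet v).ncard = k) ∧
  ∃ φ : H.edgeSet ≃ Fin m, ∀ e : H.edgeSet, (e : Sym2 V) ∈ (F (φ e)).edgeSet

/-!
Moving the edges `yw` of a graph to `xw` changes the quadratic form of its adjacency matrix at `z`
by `2 (z x - z y) ∑ z w`, the sum running over the moved vertices `w`. Take a nonnegative Perron
vector `z` of `G` and orient the shift so that `z y ≤ z x` (the shifts `S_{xy}` and `S_{yx}` are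
isomorphic). If `ρ(S) ≤ ρ(G)`, then `z` maximizes the Rayleigh quotient of `S` as well, so it is a
`ρ`-eigenvector of both graphs; comparing their rows at `x` shows that `z` vanishes at every moved
vertex. A nonzero nonnegative eigenvector of the connected graph `S` has no zero entry, so nothing
moves and `S = G`. This applies to `S_{uv}(G) ≅ B_{n,k}`, which is connected.
-/

open Matrix

namespace Matrix

variable {n : Type*} [Fintype n]

theorem dotProduct_mulVec_le_abs {A : Matrix n n ℝ} (hA : ∀ i j, 0 ≤ A i j) (x : n → ℝ) :
    x ⬝ᵥ A *ᵥ x ≤ |x| ⬝ᵥ A *ᵥ |x| := by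
  simp only [dotProduct, mulVec, Finset.mul_sum, Pi.abs_apply]
  refine Finset.sum_le_sum fun i _ => Finset.sum_le_sum fun j _ => ?_
  calc x i * (A i j * x j) ≤ |x i * (A i j * x j)| := le_abs_self _
    _ = |x i| * (A i j * |x j|) := by rw [abs_mul, abs_mul, abs_of_nonneg (hA i j)]

variable [DecidableEq n] {A : Matrix n n ℝ}

theorem IsHermitian.posSemidef_algebraMap_sSup_spectrum_sub (hA : A.IsHermitian) :
    (algebraMap ℝ (Matrix n n ℝ) (sSup (spectrum ℝ A)) - A).PosSemidef := by
  refine posSemidef_iff_isHermitian_and_spectrum_nonneg.mpr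
    ⟨(isHermitian_diagonal _).sub hA, ?_⟩
  rw [← spectrum.singleton_sub_eq]
  rintro _ ⟨r, rfl, μ, hμ, rfl⟩
  exact sub_nonneg.mpr (le_csSup (spectrum ℝ A).toFinite.bddAbove hμ)

theorem IsHermitian.dotProduct_mulVec_le (hA : A.IsHermitian) (x : n → ℝ) :
    x ⬝ᵥ A *ᵥ x ≤ sSup (spectrum ℝ A) * (x ⬝ᵥ x) := by
  have := hA.posSemidef_algebraMap_sSup_spectrum_sub.dotProduct_mulVec_nonneg x
  simpa [sub_mulVec, Algebra.algebraMap_eq_smul_one, smul_mulVec, dotProduct_sub] using this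

theorem IsHermitian.mulVec_eq_smul_of_dotProduct_mulVec_eq (hA : A.IsHermitian) {x : n → ℝ}
    (hx : x ⬝ᵥ A *ᵥ x = sSup (spectrum ℝ A) * (x ⬝ᵥ x)) :
    A *ᵥ x = sSup (spectrum ℝ A) • x := by
  have := (hA.posSemidef_algebraMap_sSup_spectrum_sub.dotProduct_mulVec_zero_iff x).mp
    (by simp [sub_mulVec, Algebra.algebraMap_eq_smul_one, smul_mulVec, dotProduct_sub, hx])
  simpa [sub_mulVec, Algebra.algebraMap_eq_smul_one, smul_mulVec, sub_eq_zero, eq_comm] using this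

theorem IsHermitian.exists_mulVec_eq_sSup_spectrum_smul [Nonempty n] (hA : A.IsHermitian) :
    ∃ x ≠ 0, A *ᵥ x = sSup (spectrum ℝ A) • x := by
  have hmem : sSup (spectrum ℝ A) ∈ spectrum ℝ A := by
    rw [hA.spectrum_real_eq_range_eigenvalues]
    exact Set.Nonempty.csSup_mem (Set.range_nonempty _) (Set.finite_range _)
  rw [← spectrum_toLin', ← Module.End.hasEigenvalue_iff_mem_spectrum] at hmem
  obtain ⟨x, hx⟩ := hmem.exists_hasEigenvector
  exact ⟨x, hx.2, by simpa using Module.End.mem_eigenspace_iff.mp hx.1⟩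

end Matrix

theorem SimpleGraph.Preconnected.eq_zero_of_mulVec_eq_smul {V : Type*} [Fintype V]
    {G : SimpleGraph V} [DecidableRel G.Adj] (hG : G.Preconnected) {x : V → ℝ} (hx0 : 0 ≤ x)
    {r : ℝ} (hx : G.adjMatrix ℝ *ᵥ x = r • x) {w : V} (hw : x w = 0) : x = 0 := by
  have hstep : ∀ a b, G.Adj a b → x a = 0 → x b = 0 := by
    intro a b hab ha
    have hsum : ∑ c ∈ G.neighborFinset a, x c = 0 := by
      rw [← adjMatrix_mulVec_apply, hx, Pi.smul_apply, ha, smul_zero]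
    exact (Finset.sum_eq_zero_iff_of_nonneg fun c _ => hx0 c).mp hsum b
      ((mem_neighborFinset G a b).mpr hab)
  funext v
  obtain ⟨p⟩ := hG w v
  induction p with
  | nil => exact hw
  | cons hab _ ih => exact ih (hstep _ _ hab hw)

namespace SimpleGraph

variable {V : Type*} [DecidableEq V]

/-- The vertices `w` for which `shiftGraph G x y` replaces the edge `yw` by `xw`. -/
def shiftMovedSet (G : SimpleGraph V) (x y : V) : Set V :=
  G.neighborSet y \ insert x (G.neighborSet x)

variable {x y : V}

theorem shiftGraph_adj (G : SimpleGraph V) (hxy : x ≠ y) {a b : V} :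
    (shiftGraph G x y).Adj a b ↔
      (G.Adj a b ∧ ¬(a = y ∧ b ∈ G.shiftMovedSet x y) ∧ ¬(b = y ∧ a ∈ G.shiftMovedSet x y)) ∨
      (a = x ∧ b ∈ G.shiftMovedSet x y) ∨ (b = x ∧ a ∈ G.shiftMovedSet x y) := by
  simp only [shiftGraph, fromEdgeSet_adj, Set.mem_image, shiftMovedSet, Set.mem_sdiff,
    Set.mem_insert_iff, mem_neighborSet]
  constructor
  · rintro ⟨⟨e, he, h⟩, hab⟩
    induction e using Sym2.ind with | _ c d => ?_
    split_ifs at h with hc <;>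
      simp only [shiftMap, Sym2.map_mk, Sym2.mem_iff, mem_edgeSet, Sym2.eq_iff] at hc h he <;>
      grind [G.adj_symm, G.irrefl]
  · rintro (⟨hab, hya, hyb⟩ | ⟨rfl, hb⟩ | ⟨rfl, ha⟩) <;>
      [refine ⟨⟨s(a, b), hab, ?_⟩, hab.ne⟩;
       refine ⟨⟨s(y, b), hb.1, ?_⟩, fun h => hb.2 (.inl h.symm)⟩;
       refine ⟨⟨s(a, y), G.adj_symm ha.1, ?_⟩, fun h => ha.2 (.inl h)⟩] <;>
      split_ifs with hc <;> simp only [shiftMap, Sym2.map_mk, Sym2.mem_iff, mem_edgeSet] at hc ⊢ <;>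
      grind [G.adj_symm, G.irrefl]

theorem shiftGraph_self (G : SimpleGraph V) (x : V) : shiftGraph G x x = G := by
  have h : ∀ e : Sym2 V, ¬(x ∈ e ∧ x ∉ e ∧ shiftMap x x e ∉ G.edgeSet) := fun e h => h.2.1 h.1
  ext a b
  simp [shiftGraph, h]

theorem shiftGraph_eq_self (G : SimpleGraph V) (hxy : x ≠ y) (h : G.shiftMovedSet x y = ∅) :
    shiftGraph G x y = G := by
  ext a b
  simp [shiftGraph_adj G hxy, h]

def shiftGraphSwapIso (G : SimpleGraph V) (hxy : x ≠ y) :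
    shiftGraph G y x ≃g shiftGraph G x y where
  toEquiv := Equiv.swap x y
  map_rel_iff' {a b} := by
    simp only [Equiv.swap_apply_def, shiftGraph_adj G hxy, shiftGraph_adj G hxy.symm,
      shiftMovedSet, Set.mem_sdiff, Set.mem_insert_iff, mem_neighborSet]
    split_ifs <;> grind [G.adj_symm, G.irrefl]

theorem adjMatrix_shiftGraph (G : SimpleGraph V) [DecidableRel G.Adj]
    [DecidableRel (shiftGraph G x y).Adj] (hxy : x ≠ y) :
    (shiftGraph G x y).adjMatrix ℝ = G.adjMatrix ℝ
      + vecMulVec (Pi.single x 1 - Pi.single y 1) ((G.shiftMovedSet x y).indicator 1)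
      + vecMulVec ((G.shiftMovedSet x y).indicator 1) (Pi.single x 1 - Pi.single y 1) := by
  ext a b
  simp only [Matrix.add_apply, adjMatrix_apply, vecMulVec_apply, shiftGraph_adj G hxy,
    Pi.sub_apply, Pi.single_apply, Set.indicator_apply, Pi.one_apply, shiftMovedSet,
    Set.mem_sdiff, Set.mem_insert_iff, mem_neighborSet]
  split_ifs <;> grind [G.adj_symm, G.irrefl]

variable [Fintype V]

theorem specRad_eq_sSup_spectrum (G : SimpleGraph V) [DecidableRel G.Adj] :
    specRad G = sSup (spectrum ℝ (G.adjMatrix ℝ)) := by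
  unfold specRad
  congr 1
  ext μ
  rw [Set.mem_ofPred_eq, Module.End.hasEigenvalue_iff_mem_spectrum, spectrum_toLin']
  congr!

theorem Iso.specRad_eq {W : Type*} [Fintype W] [DecidableEq W] {G : SimpleGraph V}
    {H : SimpleGraph W} (e : G ≃g H) : specRad G = specRad H := by
  classical
  rw [specRad_eq_sSup_spectrum, specRad_eq_sSup_spectrum, ← e.reindex_adjMatrix ℝ,
    ← coe_reindexAlgEquiv ℝ ℝ, AlgEquiv.spectrum_eq]

theorem dotProduct_adjMatrix_mulVec_le_specRad (G : SimpleGraph V) [DecidableRel G.Adj]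
    (z : V → ℝ) : z ⬝ᵥ G.adjMatrix ℝ *ᵥ z ≤ specRad G * (z ⬝ᵥ z) :=
  G.specRad_eq_sSup_spectrum ▸ (isHermitian_adjMatrix ℝ G).dotProduct_mulVec_le z

theorem adjMatrix_mulVec_eq_specRad_smul (G : SimpleGraph V) [DecidableRel G.Adj]
    {z : V → ℝ} (hz : z ⬝ᵥ G.adjMatrix ℝ *ᵥ z = specRad G * (z ⬝ᵥ z)) :
    G.adjMatrix ℝ *ᵥ z = specRad G • z := by
  rw [specRad_eq_sSup_spectrum] at hz ⊢
  exact (isHermitian_adjMatrix ℝ G).mulVec_eq_smul_of_dotProduct_mulVec_eq hz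

theorem exists_nonneg_mulVec_eq_specRad_smul [Nonempty V] (G : SimpleGraph V)
    [DecidableRel G.Adj] : ∃ x, 0 ≤ x ∧ x ≠ 0 ∧ G.adjMatrix ℝ *ᵥ x = specRad G • x := by
  obtain ⟨x, hx0, hx⟩ := (isHermitian_adjMatrix ℝ G).exists_mulVec_eq_sSup_spectrum_smul
  rw [← specRad_eq_sSup_spectrum] at hx
  have habs : |x| ⬝ᵥ |x| = x ⬝ᵥ x := by simp [dotProduct, Pi.abs_apply, abs_mul_abs_self]
  refine ⟨|x|, abs_nonneg x, by simpa using hx0, G.adjMatrix_mulVec_eq_specRad_smul ?_⟩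
  refine le_antisymm (G.dotProduct_adjMatrix_mulVec_le_specRad _) ?_
  calc specRad G * (|x| ⬝ᵥ |x|) = x ⬝ᵥ G.adjMatrix ℝ *ᵥ x := by
        rw [hx, habs, dotProduct_smul, smul_eq_mul]
    _ ≤ |x| ⬝ᵥ G.adjMatrix ℝ *ᵥ |x| :=
        dotProduct_mulVec_le_abs (fun i j => by rw [adjMatrix_apply]; split_ifs <;> norm_num) x

theorem shiftMovedSet_eq_empty_of_specRad_le (G : SimpleGraph V) [DecidableRel G.Adj]
    (hxy : x ≠ y) (hS : (shiftGraph G x y).Preconnected)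
    (hρ : specRad (shiftGraph G x y) ≤ specRad G)
    {z : V → ℝ} (hz0 : 0 ≤ z) (hz : z ≠ 0) (hzG : G.adjMatrix ℝ *ᵥ z = specRad G • z)
    (hzxy : z y ≤ z x) : G.shiftMovedSet x y = ∅ := by
  classical
  set m : V → ℝ := (G.shiftMovedSet x y).indicator 1
  set d : V → ℝ := Pi.single x 1 - Pi.single y 1
  have hm0 : 0 ≤ m := Set.indicator_nonneg fun _ _ => zero_le_one
  have hmz : 0 ≤ m ⬝ᵥ z := dotProduct_nonneg_of_nonneg hm0 hz0
  have hzz : 0 < z ⬝ᵥ z := by simpa using dotProduct_self_star_pos_iff.mpr hz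
  have hdz : d ⬝ᵥ z = z x - z y := by simp [d, sub_dotProduct, single_dotProduct]
  have hSz : (shiftGraph G x y).adjMatrix ℝ *ᵥ z
      = specRad G • z + (m ⬝ᵥ z) • d + (z x - z y) • m := by
    rw [adjMatrix_shiftGraph G hxy, add_mulVec, add_mulVec, hzG, vecMulVec_mulVec,
      vecMulVec_mulVec, op_smul_eq_smul, op_smul_eq_smul, hdz]
  have hQ : specRad G * (z ⬝ᵥ z) ≤ z ⬝ᵥ (shiftGraph G x y).adjMatrix ℝ *ᵥ z := by
    rw [hSz]
    simp only [dotProduct_add, dotProduct_smul, smul_eq_mul, d, dotProduct_sub, dotProduct_single]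
    nlinarith [dotProduct_comm z m]
  have hle := (shiftGraph G x y).dotProduct_adjMatrix_mulVec_le_specRad z
  have hρeq : specRad (shiftGraph G x y) = specRad G :=
    le_antisymm hρ (le_of_mul_le_mul_right (hQ.trans hle) hzz)
  have hSeig : (shiftGraph G x y).adjMatrix ℝ *ᵥ z = specRad G • z := by
    rw [← hρeq]
    exact adjMatrix_mulVec_eq_specRad_smul _ (le_antisymm hle (hρeq ▸ hQ))
  have hmz0 : m ⬝ᵥ z = 0 := by
    have hx := congrFun (hSz.symm.trans hSeig) x
    have hmx : m x = 0 := Set.indicator_of_notMem (fun h => h.2 (Set.mem_insert x _)) _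
    simpa [d, hmx, hxy] using hx
  rw [Set.eq_empty_iff_forall_notMem]
  intro w hw
  have hzw : z w = 0 := by
    have := (Finset.sum_eq_zero_iff_of_nonneg fun i _ => mul_nonneg (hm0 i) (hz0 i)).mp hmz0 w
      (Finset.mem_univ w)
    simpa [m, Set.indicator_of_mem hw] using this
  exact hz (hS.eq_zero_of_mulVec_eq_smul hz0 hSeig hzw)

theorem nonempty_iso_shiftGraph_of_specRad_le [Nonempty V] (G : SimpleGraph V)
    (hS : (shiftGraph G x y).Preconnected) (hρ : specRad (shiftGraph G x y) ≤ specRad G) :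
    Nonempty (G ≃g shiftGraph G x y) := by
  classical
  rcases eq_or_ne x y with rfl | hxy
  · rw [shiftGraph_self]
    exact ⟨Iso.refl⟩
  obtain ⟨z, hz0, hz, hzG⟩ := G.exists_nonneg_mulVec_eq_specRad_smul
  rcases le_total (z y) (z x) with hzxy | hzyx
  · rw [shiftGraph_eq_self G hxy
      (G.shiftMovedSet_eq_empty_of_specRad_le hxy hS hρ hz0 hz hzG hzxy)]
    exact ⟨Iso.refl⟩
  · have e := G.shiftGraphSwapIso hxy
    rw [shiftGraph_eq_self G hxy.symm (G.shiftMovedSet_eq_empty_of_specRad_le hxy.symm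
      (e.preconnected_iff.mpr hS) (e.specRad_eq ▸ hρ) hz0 hz hzG hzyx)] at e
    exact ⟨e⟩

end SimpleGraph

theorem bipG_preconnected {n a b : ℕ} (ha : 0 < a) (hb : b < n) : (bipG n a b).Preconnected := by
  have hn : 0 < n := by omega
  let o : Fin (2 * n) := ⟨0, by omega⟩
  let p : Fin (2 * n) := ⟨n, by omega⟩
  have hreach : ∀ i, (bipG n a b).Reachable i o := by
    intro i
    by_cases hi : i.val < n
    · have hip : (bipG n a b).Adj i p := .inl ⟨hi, le_rfl, .inr (by simp [p]; omega)⟩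
      have hpo : (bipG n a b).Adj p o := .inr ⟨hn, le_rfl, .inl ha⟩
      exact hip.reachable.trans hpo.reachable
    · have hoi : (bipG n a b).Adj o i := .inl ⟨hn, not_lt.mp hi, .inl ha⟩
      exact hoi.symm.reachable
  exact fun i j => (hreach i).trans (hreach j).symm

theorem stmt9_general (n k : ℕ) (hk : 2 ≤ k) (hn : 2*k ≤ n)
    (G : SimpleGraph (Fin (2*n)))
    (u v : Fin (2*n))
    (hρ : specRad (bipG n (k-1) 1) ≤ specRad G)
    (hiso : Nonempty (shiftGraph G u v ≃g bipG n (k-1) 1)) :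
    Nonempty (G ≃g bipG n (k-1) 1) := by
  obtain ⟨e⟩ := hiso
  have : Nonempty (Fin (2 * n)) := ⟨⟨0, by omega⟩⟩
  have hS : (shiftGraph G u v).Preconnected :=
    e.preconnected_iff.mpr (bipG_preconnected (by omega) (by omega))
  obtain ⟨f⟩ := G.nonempty_iso_shiftGraph_of_specRad_le hS (e.specRad_eq ▸ hρ)
  exact ⟨f.trans e⟩

/-- if ρ(G) ≥ ρ(B_{n,k}) and S_{uv}(G) ≅ B_{n,k} (u < v in the same
part), then G ≅ B_{n,k}. -/
theorem stmt9 (n k : ℕ) (hk : 2 ≤ k) (hn : 2*k ≤ n)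
    (G : SimpleGraph (Fin (2*n))) (X Y : Set (Fin (2*n)))
    (hpart : ∀ v, v ∈ X ↔ v ∉ Y) (hX : X.ncard = n)
    (hbip : ∀ u w, G.Adj u w → (u ∈ X ∧ w ∈ Y) ∨ (u ∈ Y ∧ w ∈ X))
    (u v : Fin (2*n)) (huv : u < v)
    (hside : (u ∈ X ∧ v ∈ X) ∨ (u ∈ Y ∧ v ∈ Y))
    (hρ : specRad (bipG n (k-1) 1) ≤ specRad G)
    (hiso : Nonempty (shiftGraph G u v ≃g bipG n (k-1) 1)) :
    Nonempty (G ≃g bipG n (k-1) 1) :=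
  stmt9_general n k hk hn G u v hρ hiso
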